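/- Let q ≥ 2, k = 2, and identify the alphabet with Z_q = {0,1,…,q−1}. For τ ∈ Z_q let f_τ : Z_q² → {0,1} be f_τ(x,y) = 1 iff x − y ≡ τ (mod q), and let F = {f : Z_q² → {0,1} : f^{−1}(1) is the graph of a bijection of Z_q} (the Unique Games family; each f_τ ∈ F). Let D^Y be the uniform distribution on {(f_τ, (σ+τ, σ)) : σ,τ ∈ Z_q} (addition mod q) and D^N the uniform distribution on {f_τ : τ ∈ Z_q} × Z_q². Then: (i) D^Y ∈ S_1^Y(F); (ii) for every assignment b ∈ Z_q^{2×q}, E_{(f,a)∼D^N}[C(f,a)(b)] = 1/q, and consequently D^N ∈ S_{1/q}^N(F); and (iii) μ(D^Y) = μ(D^N). -/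

import Mathlib

/-!
Both distributions are uniform on the image of an injective parametrization — `(σ, τ)` for `D^Y`,
`(τ, a)` for `D^N` — so each expectation is an average over the parameters. The planted
assignment satisfies every `(f_τ, (σ + τ, σ))`. For a fixed assignment `b` and fixed `a`, exactly
one shift `τ = b_{1,a_1} − b_{2,a_2}` is satisfied, so `D^N` scores `1/q` against every `b`, hence
against every random assignment. Given `f_τ`, each coordinate `a_i` is uniform under both
distributions, so the marginals agree.
-/

open scoped Classical

/-- `D` is a probability distribution on the finite type `Ω`. -/
def IsDist {Ω : Type*} [Fintype Ω] (D : Ω → ℝ) : Prop :=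
  (∀ x, 0 ≤ D x) ∧ ∑ x, D x = 1

/-- The value `C(f,a)(b)` of the constraint `(f,a)` on the assignment
`b = (b_{i,σ})` to the `k × q` variables (alphabet `A`). -/
def cVal {A : Type*} {k : ℕ} (f : (Fin k → A) → Bool) (a : Fin k → A)
    (b : Fin k → A → A) : ℝ :=
  if f (fun i => b i (a i)) then 1 else 0

/-- The planted assignment `𝕀` with `𝕀_{i,σ} = σ`. -/
def planted (A : Type*) (k : ℕ) : Fin k → A → A := fun _ σ => σ

/-- The set `S_γ^Y(F)` of YES distributions. -/
noncomputable def SY {A : Type*} [Fintype A] {k : ℕ}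
    (F : Finset ((Fin k → A) → Bool)) (γ : ℝ) :
    Set ((↥F × (Fin k → A)) → ℝ) :=
  {D | IsDist D ∧
    γ ≤ ∑ p : ↥F × (Fin k → A), D p * cVal (p.1 : (Fin k → A) → Bool) p.2 (planted A k)}

/-- The set `S_β^N(F)` of NO distributions. -/
noncomputable def SN {A : Type*} [Fintype A] {k : ℕ}
    (F : Finset ((Fin k → A) → Bool)) (β : ℝ) :
    Set ((↥F × (Fin k → A)) → ℝ) :=
  {D | IsDist D ∧ ∀ P : A → A → ℝ, (∀ σ, IsDist (P σ)) →
    (∑ p : ↥F × (Fin k → A), D p *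
      ∑ b : Fin k → A → A,
        (∏ i, ∏ σ, P σ (b i σ)) * cVal (p.1 : (Fin k → A) → Bool) p.2 b) ≤ β}

/-- The marginal vector `μ(D)` of a distribution `D` on `F × A^k`. -/
noncomputable def marginal {A : Type*} [Fintype A] {k : ℕ}
    (F : Finset ((Fin k → A) → Bool)) (D : ↥F × (Fin k → A) → ℝ) :
    ↥F × Fin k × A → ℝ :=
  fun x => ∑ a : Fin k → A, if a x.2.1 = x.2.2 then D (x.1, a) else 0

/-- The Unique Games constraint `f_τ(x,y) = 1` iff `x − y = τ` in `Z_q`. -/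
def fUG (q : ℕ) (τ : ZMod q) : (Fin 2 → ZMod q) → Bool :=
  fun a => decide (a 0 - a 1 = τ)

/-- The Unique Games family: all constraints whose set of satisfying assignments is the
graph of a bijection of `Z_q`. -/
noncomputable def UGFamily (q : ℕ) [NeZero q] : Finset ((Fin 2 → ZMod q) → Bool) :=
  Finset.univ.filter fun f => ∃ π : Equiv.Perm (ZMod q), ∀ a, f a = true ↔ a 0 = π (a 1)

/-- The YES distribution for Unique Games: uniform on `{(f_τ, (σ+τ, σ)) : σ, τ ∈ Z_q}`. -/
noncomputable def ugDY (q : ℕ) [NeZero q] :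
    ↥(UGFamily q) × (Fin 2 → ZMod q) → ℝ :=
  fun p =>
    if ∃ σ τ : ZMod q, (p.1 : (Fin 2 → ZMod q) → Bool) = fUG q τ ∧ p.2 = ![σ + τ, σ]
    then ((q : ℝ) ^ 2)⁻¹ else 0

/-- The NO distribution for Unique Games: uniform on `{f_τ : τ ∈ Z_q} × Z_q²`. -/
noncomputable def ugDN (q : ℕ) [NeZero q] :
    ↥(UGFamily q) × (Fin 2 → ZMod q) → ℝ :=
  fun p =>
    if ∃ τ : ZMod q, (p.1 : (Fin 2 → ZMod q) → Bool) = fUG q τ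
    then ((q : ℝ) ^ 3)⁻¹ else 0

open Finset Function

section NoDistributions

variable {A : Type*} [Fintype A]

lemma isDist_prod_pi {ι : Type*} [Fintype ι] [DecidableEq ι] {P : A → A → ℝ}
    (hP : ∀ σ, IsDist (P σ)) :
    IsDist fun b : ι → A → A => ∏ i, ∏ σ, P σ (b i σ) := by
  refine ⟨fun b => prod_nonneg fun i _ => prod_nonneg fun σ _ => (hP σ).1 _, ?_⟩
  have hrow : ∑ c : A → A, ∏ σ, P σ (c σ) = 1 := by
    rw [← Fintype.prod_sum]
    exact prod_eq_one fun σ _ => (hP σ).2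
  rw [← Fintype.prod_sum (fun (_ : ι) (c : A → A) => ∏ σ, P σ (c σ)), hrow, prod_const_one]

variable {k : ℕ} {F : Finset ((Fin k → A) → Bool)}

/-- The value of `D` under a random assignment is an average of its values under deterministic
ones. -/
lemma mem_SN_of_forall_le {D : ↥F × (Fin k → A) → ℝ} {β : ℝ} (hD : IsDist D)
    (h : ∀ b, ∑ p : ↥F × (Fin k → A), D p * cVal (p.1 : (Fin k → A) → Bool) p.2 b ≤ β) :
    D ∈ SN F β := by
  refine ⟨hD, fun P hP => ?_⟩
  have hw := isDist_prod_pi (ι := Fin k) hP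
  set w : (Fin k → A → A) → ℝ := fun b => ∏ i, ∏ σ, P σ (b i σ)
  calc ∑ p : ↥F × (Fin k → A), D p * ∑ b, w b * cVal (p.1 : (Fin k → A) → Bool) p.2 b
      = ∑ b, w b * ∑ p : ↥F × (Fin k → A), D p * cVal (p.1 : (Fin k → A) → Bool) p.2 b := by
        simp_rw [mul_sum, mul_left_comm (D _)]
        rw [sum_comm]
    _ ≤ ∑ b, w b * β := sum_le_sum fun b _ => mul_le_mul_of_nonneg_left (h b) (hw.1 b)
    _ = β := by rw [← sum_mul, hw.2, one_mul]

end NoDistributions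

section UniformOnRange

variable {ι Ω : Type*} [Fintype ι] [Fintype Ω] {m : ι → Ω}

/-- Uniform on the image of `m`; a distribution only when `m` is injective. -/
noncomputable def uniformOnRange (m : ι → Ω) : Ω → ℝ :=
  fun p => if p ∈ Set.range m then (Fintype.card ι : ℝ)⁻¹ else 0

lemma sum_uniformOnRange_mul (hm : Injective m) (g : Ω → ℝ) :
    ∑ p, uniformOnRange m p * g p = (Fintype.card ι : ℝ)⁻¹ * ∑ i, g (m i) := by
  rw [mul_sum]
  refine (Fintype.sum_of_injective m hm _ _ (fun p hp => ?_) fun i => ?_).symm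
  · rw [uniformOnRange, if_neg hp, zero_mul]
  · simp [uniformOnRange]

lemma isDist_uniformOnRange [Nonempty ι] (hm : Injective m) : IsDist (uniformOnRange m) := by
  refine ⟨fun p => by unfold uniformOnRange; split_ifs <;> positivity, ?_⟩
  simpa using sum_uniformOnRange_mul hm 1

end UniformOnRange

lemma marginal_apply_eq_sum_mul {A : Type*} [Fintype A] [DecidableEq A] {k : ℕ}
    (F : Finset ((Fin k → A) → Bool)) (D : ↥F × (Fin k → A) → ℝ) (f : ↥F) (i : Fin k) (σ : A) :
    marginal F D (f, i, σ) = ∑ p, D p * if p.1 = f ∧ p.2 i = σ then 1 else 0 := by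
  rw [Fintype.sum_prod_type, Fintype.sum_eq_single f fun g hg => by simp [hg]]
  simp [marginal]

lemma marginal_uniformOnRange_apply {A ι : Type*} [Fintype A] [DecidableEq A] [Fintype ι] {k : ℕ}
    {F : Finset ((Fin k → A) → Bool)} {m : ι → ↥F × (Fin k → A)} (hm : Injective m)
    (f : ↥F) (i : Fin k) (σ : A) :
    marginal F (uniformOnRange m) (f, i, σ) =
      (Fintype.card ι : ℝ)⁻¹ * ∑ x, if (m x).1 = f ∧ (m x).2 i = σ then 1 else 0 := by
  rw [marginal_apply_eq_sum_mul, sum_uniformOnRange_mul hm]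

lemma sum_pi_boole_apply_eq {ι A R : Type*} [Fintype ι] [DecidableEq ι] [Fintype A]
    [DecidableEq A] [Semiring R] (i : ι) (σ : A) :
    ∑ a : ι → A, (if a i = σ then (1 : R) else 0) = Fintype.card A ^ (Fintype.card ι - 1) := by
  rw [sum_boole, ← Fintype.piFinset_univ,
    Fintype.card_filter_piFinset_const_eq_of_mem _ _ (mem_univ σ)]
  simp

lemma sum_boole_add_vecCons_apply_eq {G R : Type*} [AddGroup G] [Fintype G] [DecidableEq G]
    [AddCommMonoidWithOne R] (τ : G) (i : Fin 2) (σ : G) :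
    ∑ σ' : G, (if (![σ' + τ, σ'] : Fin 2 → G) i = σ then (1 : R) else 0) = 1 := by
  fin_cases i <;> simp [← eq_sub_iff_add_eq]

section UniqueGames

variable (q : ℕ)

lemma fUG_injective : Injective (fUG q) := by
  intro τ τ' h
  simpa [fUG] using congrFun h ![τ, 0]

variable [NeZero q]

lemma fUG_mem_UGFamily (τ : ZMod q) : fUG q τ ∈ UGFamily q := by
  simp only [UGFamily, mem_filter, mem_univ, true_and]
  exact ⟨Equiv.addRight τ, fun a => by simp [fUG, sub_eq_iff_eq_add, add_comm]⟩

def ugConstraint (τ : ZMod q) : ↥(UGFamily q) := ⟨fUG q τ, fUG_mem_UGFamily q τ⟩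

lemma ugConstraint_injective : Injective (ugConstraint q) :=
  fun _ _ h => fUG_injective q (congrArg Subtype.val h)

/-- `(σ, τ) ↦ (f_τ, (σ + τ, σ))`, parametrizing the support of `D^Y`. -/
abbrev ugYesPoint (x : ZMod q × ZMod q) : ↥(UGFamily q) × (Fin 2 → ZMod q) :=
  (ugConstraint q x.2, ![x.1 + x.2, x.1])

/-- `(τ, a) ↦ (f_τ, a)`, parametrizing the support of `D^N`. -/
abbrev ugNoPoint (x : ZMod q × (Fin 2 → ZMod q)) : ↥(UGFamily q) × (Fin 2 → ZMod q) :=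
  (ugConstraint q x.1, x.2)

lemma ugYesPoint_injective : Injective (ugYesPoint q) := by
  rintro ⟨σ, τ⟩ ⟨σ', τ'⟩ h
  simp only [ugYesPoint, Prod.mk.injEq] at h
  exact Prod.ext (by simpa using congrFun h.2 1) (ugConstraint_injective q h.1)

lemma ugNoPoint_injective : Injective (ugNoPoint q) :=
  (ugConstraint_injective q).prodMap injective_id

lemma ugDY_eq_uniformOnRange : ugDY q = uniformOnRange (ugYesPoint q) := by
  funext p
  have hsupp : (∃ σ τ : ZMod q, (p.1 : (Fin 2 → ZMod q) → Bool) = fUG q τ ∧ p.2 = ![σ + τ, σ])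
      ↔ p ∈ Set.range (ugYesPoint q) := by
    constructor
    · rintro ⟨σ, τ, h₁, h₂⟩
      exact ⟨(σ, τ), Prod.ext (Subtype.ext h₁.symm) h₂.symm⟩
    · rintro ⟨⟨σ, τ⟩, rfl⟩
      exact ⟨σ, τ, rfl, rfl⟩
  have hcard : (Fintype.card (ZMod q × ZMod q) : ℝ) = q ^ 2 := by simp; ring
  simp only [ugDY, uniformOnRange, hsupp, hcard]

lemma ugDN_eq_uniformOnRange : ugDN q = uniformOnRange (ugNoPoint q) := by
  funext p
  have hsupp : (∃ τ : ZMod q, (p.1 : (Fin 2 → ZMod q) → Bool) = fUG q τ)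
      ↔ p ∈ Set.range (ugNoPoint q) := by
    constructor
    · rintro ⟨τ, h⟩
      exact ⟨(τ, p.2), Prod.ext (Subtype.ext h.symm) rfl⟩
    · rintro ⟨⟨τ, a⟩, rfl⟩
      exact ⟨τ, rfl⟩
  have hcard : (Fintype.card (ZMod q × (Fin 2 → ZMod q)) : ℝ) = q ^ 3 := by simp; ring
  simp only [ugDN, uniformOnRange, hsupp, hcard]

lemma isDist_ugDY : IsDist (ugDY q) :=
  ugDY_eq_uniformOnRange q ▸ isDist_uniformOnRange (ugYesPoint_injective q)

lemma isDist_ugDN : IsDist (ugDN q) :=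
  ugDN_eq_uniformOnRange q ▸ isDist_uniformOnRange (ugNoPoint_injective q)

lemma sum_ugDY_mul_cVal_planted :
    ∑ p : ↥(UGFamily q) × (Fin 2 → ZMod q),
      ugDY q p * cVal (p.1 : (Fin 2 → ZMod q) → Bool) p.2 (planted (ZMod q) 2) = 1 := by
  have hsat : ∀ x, cVal ((ugYesPoint q x).1 : (Fin 2 → ZMod q) → Bool) (ugYesPoint q x).2
      (planted (ZMod q) 2) = 1 := fun x => by simp [cVal, fUG, planted, ugConstraint]
  have hq : (q : ℝ) ≠ 0 := NeZero.ne _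
  rw [ugDY_eq_uniformOnRange, sum_uniformOnRange_mul (ugYesPoint_injective q)]
  simp [hsat]
  field_simp

lemma sum_cVal_fUG (a : Fin 2 → ZMod q) (b : Fin 2 → ZMod q → ZMod q) :
    ∑ τ, cVal (fUG q τ) a b = 1 := by
  simp [cVal, fUG]

lemma sum_ugDN_mul_cVal (b : Fin 2 → ZMod q → ZMod q) :
    ∑ p : ↥(UGFamily q) × (Fin 2 → ZMod q),
      ugDN q p * cVal (p.1 : (Fin 2 → ZMod q) → Bool) p.2 b = (q : ℝ)⁻¹ := by
  have hq : (q : ℝ) ≠ 0 := NeZero.ne _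
  rw [ugDN_eq_uniformOnRange, sum_uniformOnRange_mul (ugNoPoint_injective q),
    Fintype.sum_prod_type, sum_comm]
  simp only [ugConstraint, sum_cVal_fUG]
  simp
  field_simp

lemma marginal_ugDY_eq_marginal_ugDN :
    marginal (UGFamily q) (ugDY q) = marginal (UGFamily q) (ugDN q) := by
  funext ⟨f, i, σ⟩
  set N := ∑ τ, if ugConstraint q τ = f then (1 : ℝ) else 0
  have hY : ∑ x, (if (ugYesPoint q x).1 = f ∧ (ugYesPoint q x).2 i = σ then (1 : ℝ) else 0)
      = N := by
    simp only [ite_and, Fintype.sum_prod_type]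
    rw [sum_comm]
    simp only [← ite_sum_zero, sum_boole_add_vecCons_apply_eq, N]
  have hN : ∑ x, (if (ugNoPoint q x).1 = f ∧ (ugNoPoint q x).2 i = σ then (1 : ℝ) else 0)
      = q * N := by
    simp only [ite_and, Fintype.sum_prod_type, ← ite_sum_zero, sum_pi_boole_apply_eq, N, mul_sum,
      mul_boole]
    simp
  have hq : (q : ℝ) ≠ 0 := NeZero.ne _
  rw [ugDY_eq_uniformOnRange, ugDN_eq_uniformOnRange,
    marginal_uniformOnRange_apply (ugYesPoint_injective q), hY,
    marginal_uniformOnRange_apply (ugNoPoint_injective q), hN]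
  simp only [Fintype.card_prod, ZMod.card, Fintype.card_pi, prod_const, card_univ,
    Fintype.card_fin]
  push_cast
  field_simp

end UniqueGames

theorem uniqueGames_hard_pair_general (q : ℕ) [NeZero q] :
    ugDY q ∈ SY (UGFamily q) 1 ∧
    (∀ b : Fin 2 → ZMod q → ZMod q,
      (∑ p : ↥(UGFamily q) × (Fin 2 → ZMod q),
        ugDN q p * cVal (p.1 : (Fin 2 → ZMod q) → Bool) p.2 b) = (q : ℝ)⁻¹) ∧
    ugDN q ∈ SN (UGFamily q) ((q : ℝ)⁻¹) ∧
    marginal (UGFamily q) (ugDY q) = marginal (UGFamily q) (ugDN q) :=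
  ⟨⟨isDist_ugDY q, (sum_ugDY_mul_cVal_planted q).ge⟩,
    sum_ugDN_mul_cVal q,
    mem_SN_of_forall_le (isDist_ugDN q) fun b => (sum_ugDN_mul_cVal q b).le,
    marginal_ugDY_eq_marginal_ugDN q⟩

/-- Example 2 of the paper (`Max-qUG`): the pair `(D^Y, D^N)` witnesses
`K_1^Y ∩ K_{1/q}^N ≠ ∅` for the Unique Games family. -/
theorem uniqueGames_hard_pair (q : ℕ) [NeZero q] (hq : 2 ≤ q) :
    ugDY q ∈ SY (UGFamily q) 1 ∧
    (∀ b : Fin 2 → ZMod q → ZMod q,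
      (∑ p : ↥(UGFamily q) × (Fin 2 → ZMod q),
        ugDN q p * cVal (p.1 : (Fin 2 → ZMod q) → Bool) p.2 b) = (q : ℝ)⁻¹) ∧
    ugDN q ∈ SN (UGFamily q) ((q : ℝ)⁻¹) ∧
    marginal (UGFamily q) (ugDY q) = marginal (UGFamily q) (ugDN q) :=
  uniqueGames_hard_pair_general q
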